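/- arXiv:1409.7857 — 2 statements merged into one kernel-verified Lean document; each statement's English description precedes it below -/
import Mathlib

section
/- Let Γ be a family of normal states on a von Neumann algebra M, and let φ and ω be two faithful normal states belonging to Γ such that φ commutes with ω. Then the von Neumann algebra generated by the Connes cocycles with respect to φ equals the one generated by the cocycles with respect to ω: W*({[Dρ:Dφ]_t : t ∈ ℝ, ρ ∈ Γ}) = W*({[Dρ:Dω]_t : t ∈ ℝ, ρ ∈ Γ}). Consequently, the definition of joint commutativity of Γ does not depend on the choice of the faithful state in Γ. -/
open Filter

noncomputable section

/-- A normal state on the algebra of bounded operators of a complex Hilbert space `H`,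
given by its standard representation `φ(x) = ∑ₙ ⟪ξₙ, x ξₙ⟫` with `∑ₙ ‖ξₙ‖² = 1`.
(Every normal state on a von Neumann algebra `M ⊆ B(H)` is the restriction to `M` of
such a functional.) -/
structure NormalState (H : Type*) [NormedAddCommGroup H] [InnerProductSpace ℂ H] where
  app : (H →L[ℂ] H) → ℂ
  normal : ∃ ξ : ℕ → H, (Summable fun n => ‖ξ n‖ ^ 2) ∧ (∑' n, ‖ξ n‖ ^ 2) = 1 ∧
      ∀ x : H →L[ℂ] H, app x = ∑' n, (inner ℂ (ξ n) (x (ξ n)) : ℂ)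

variable {H : Type*} [NormedAddCommGroup H] [InnerProductSpace ℂ H] [CompleteSpace H]

/-- A normal state is faithful on `M` if it does not vanish at nonzero positive
elements of `M`. -/
def NormalState.IsFaithful (φ : NormalState H) (M : VonNeumannAlgebra H) : Prop :=
  ∀ x : H →L[ℂ] H, x ∈ M → x.IsPositive → φ.app x = 0 → x = 0

/-- `p` is the support projection `s(φ)` of the normal state `φ` in `M`:
the smallest projection of `M` with `φ(1 - p) = 0`. -/
def IsSupportProjection (M : VonNeumannAlgebra H) (φ : NormalState H)
    (p : H →L[ℂ] H) : Prop :=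
  p ∈ M ∧ p * p = p ∧ star p = p ∧ φ.app (1 - p) = 0 ∧
    ∀ q : H →L[ℂ] H, q ∈ M → q * q = q → star q = q → φ.app (1 - q) = 0 → p * q = p

/-- The von Neumann algebra `W*(S)` generated by a set `S ⊆ B(H)`:
the double commutant of `S ∪ S*`. -/
def genVN (S : Set (H →L[ℂ] H)) : Set (H →L[ℂ] H) :=
  Set.centralizer (Set.centralizer (S ∪ star '' S))

/-- A set of operators generates an abelian von Neumann algebra. -/
def IsAbelianSet (S : Set (H →L[ℂ] H)) : Prop :=
  ∀ x ∈ S, ∀ y ∈ S, x * y = y * x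

/-- Modular theory data on a (σ-finite) von Neumann algebra `M ⊆ B(H)`:
for every faithful normal state `ω` the modular automorphism group
`mod ω t = σ_t^ω` (characterized by `ω`-invariance and the KMS condition), and for
every normal state `φ` and faithful normal state `ω` the Connes cocycles
`ccl φ ω t = [Dφ : Dω]_t`, with their standard properties (cocycle identity,
support relations, chain rule and inversion formula). -/
structure ModularTheory (H : Type*) [NormedAddCommGroup H] [InnerProductSpace ℂ H]
    [CompleteSpace H] (M : VonNeumannAlgebra H) where
  /-- the modular automorphism group `σ^ω` of a faithful normal state `ω` -/
  mod : NormalState H → ℝ → (H →L[ℂ] H) → (H →L[ℂ] H)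
  /-- the Connes cocycle `[Dφ : Dω]_t` -/
  ccl : NormalState H → NormalState H → ℝ → (H →L[ℂ] H)
  /-- the support projection `s(φ)` -/
  supp : NormalState H → (H →L[ℂ] H)
  supp_spec : ∀ φ : NormalState H, IsSupportProjection M φ (supp φ)
  mod_mem : ∀ ω : NormalState H, ω.IsFaithful M → ∀ t : ℝ, ∀ x ∈ M, mod ω t x ∈ M
  mod_linear : ∀ ω : NormalState H, ω.IsFaithful M → ∀ t : ℝ, IsLinearMap ℂ (mod ω t)
  mod_mul : ∀ ω : NormalState H, ω.IsFaithful M → ∀ (t : ℝ) (x y : H →L[ℂ] H),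
    mod ω t (x * y) = mod ω t x * mod ω t y
  mod_star : ∀ ω : NormalState H, ω.IsFaithful M → ∀ (t : ℝ) (x : H →L[ℂ] H),
    mod ω t (star x) = star (mod ω t x)
  mod_add : ∀ ω : NormalState H, ω.IsFaithful M → ∀ (s t : ℝ) (x : H →L[ℂ] H),
    mod ω (s + t) x = mod ω s (mod ω t x)
  mod_zero : ∀ ω : NormalState H, ω.IsFaithful M → ∀ x : H →L[ℂ] H, mod ω 0 x = x
  mod_invariant : ∀ ω : NormalState H, ω.IsFaithful M → ∀ (t : ℝ) (x : H →L[ℂ] H),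
    ω.app (mod ω t x) = ω.app x
  mod_cont : ∀ ω : NormalState H, ω.IsFaithful M → ∀ (x : H →L[ℂ] H) (ξ η : H),
    Continuous fun t : ℝ => (inner ℂ ξ (mod ω t x η) : ℂ)
  mod_kms : ∀ ω : NormalState H, ω.IsFaithful M → ∀ x ∈ M, ∀ y ∈ M, ∃ F : ℂ → ℂ,
    ContinuousOn F {z : ℂ | 0 ≤ z.im ∧ z.im ≤ 1} ∧
    DifferentiableOn ℂ F {z : ℂ | 0 < z.im ∧ z.im < 1} ∧
    (∀ t : ℝ, F t = ω.app (mod ω t x * y)) ∧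
    (∀ t : ℝ, F (t + Complex.I) = ω.app (y * mod ω t x))
  ccl_mem : ∀ φ ω : NormalState H, ω.IsFaithful M → ∀ t : ℝ, ccl φ ω t ∈ M
  ccl_cocycle : ∀ φ ω : NormalState H, ω.IsFaithful M → ∀ s t : ℝ,
    ccl φ ω (t + s) = ccl φ ω t * mod ω t (ccl φ ω s)
  ccl_zero : ∀ φ ω : NormalState H, ω.IsFaithful M → ccl φ ω 0 = supp φ
  ccl_mul_star : ∀ φ ω : NormalState H, ω.IsFaithful M → ∀ t : ℝ,
    ccl φ ω t * star (ccl φ ω t) = supp φ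
  ccl_star_mul : ∀ φ ω : NormalState H, ω.IsFaithful M → ∀ t : ℝ,
    star (ccl φ ω t) * ccl φ ω t = mod ω t (supp φ)
  ccl_chain : ∀ ρ φ ω : NormalState H, φ.IsFaithful M → ω.IsFaithful M → ∀ t : ℝ,
    ccl ρ φ t = ccl ρ ω t * ccl ω φ t
  ccl_inv : ∀ φ ω : NormalState H, φ.IsFaithful M → ω.IsFaithful M → ∀ t : ℝ,
    ccl ω φ t = star (ccl φ ω t)
  ccl_cont : ∀ φ ω : NormalState H, ω.IsFaithful M → ∀ ξ η : H,
    Continuous fun t : ℝ => (inner ℂ ξ (ccl φ ω t η) : ℂ)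

/-- A normal state `φ` commutes with the faithful normal state `ω` (relative to the
modular data `T`) if `φ ∘ σ_t^ω = φ` on `M` for all `t ∈ ℝ`. -/
def CommutesWith (M : VonNeumannAlgebra H) (T : ModularTheory H M)
    (φ ω : NormalState H) : Prop :=
  ∀ t : ℝ, ∀ x ∈ M, φ.app (T.mod ω t x) = φ.app x

/-- The set of all Connes cocycles `[Dρ : Dω]_t`, `t ∈ ℝ`, `ρ ∈ Γ`. -/
def cocycleSet (M : VonNeumannAlgebra H) (T : ModularTheory H M)
    (Γ : Set (NormalState H)) (ω : NormalState H) : Set (H →L[ℂ] H) :=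
  {u | ∃ ρ ∈ Γ, ∃ t : ℝ, u = T.ccl ρ ω t}

/-! The chain rule and the inversion formula give `[Dρ:Dφ]_t = [Dρ:Dω]_t [Dφ:Dω]_t*`.
As `φ ∈ Γ`, both factors lie in `W*({[Dρ:Dω]_t})`, so every generator of the first algebra
lies in the second, and symmetrically. -/

theorem genVN_eq_coe_starSubalgebra_centralizer (S : Set (H →L[ℂ] H)) :
    genVN S =
      StarSubalgebra.centralizer ℂ (StarSubalgebra.centralizer ℂ S : Set (H →L[ℂ] H)) := by
  rw [StarSubalgebra.coe_centralizer_centralizer, genVN, Set.image_star]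

theorem subset_genVN (S : Set (H →L[ℂ] H)) : S ⊆ genVN S :=
  fun _ hx => Set.subset_centralizer_centralizer (Or.inl hx)

theorem star_mem_genVN {S : Set (H →L[ℂ] H)} {a : H →L[ℂ] H} (ha : a ∈ genVN S) :
    star a ∈ genVN S := by
  rw [genVN_eq_coe_starSubalgebra_centralizer] at ha ⊢
  exact star_mem ha

theorem mul_mem_genVN {S : Set (H →L[ℂ] H)} {a b : H →L[ℂ] H}
    (ha : a ∈ genVN S) (hb : b ∈ genVN S) : a * b ∈ genVN S :=
  Set.mul_mem_centralizer ha hb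

theorem genVN_subset_genVN {S S' : Set (H →L[ℂ] H)} (h : S ⊆ genVN S') :
    genVN S ⊆ genVN S' := by
  have hstar : S ∪ star '' S ⊆ genVN S' := by
    rintro _ (hs | ⟨x, hx, rfl⟩)
    · exact h hs
    · exact star_mem_genVN (h hx)
  have hcomm : Set.centralizer (S' ∪ star '' S') ⊆ Set.centralizer (S ∪ star '' S) := by
    simpa only [genVN, Set.centralizer_centralizer_centralizer] using
      Set.centralizer_subset hstar
  exact Set.centralizer_subset hcomm

theorem cocycleSet_subset_genVN_cocycleSet {M : VonNeumannAlgebra H} (T : ModularTheory H M)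
    {Γ : Set (NormalState H)} {φ ω : NormalState H} (hφΓ : φ ∈ Γ)
    (hφ : φ.IsFaithful M) (hω : ω.IsFaithful M) :
    cocycleSet M T Γ φ ⊆ genVN (cocycleSet M T Γ ω) := by
  rintro _ ⟨ρ, hρΓ, t, rfl⟩
  rw [T.ccl_chain ρ φ ω hφ hω t, T.ccl_inv φ ω hφ hω t]
  exact mul_mem_genVN (subset_genVN _ ⟨ρ, hρΓ, t, rfl⟩)
    (star_mem_genVN (subset_genVN _ ⟨φ, hφΓ, t, rfl⟩))

theorem genVN_cocycles_independent_of_faithful_state_general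
    {H : Type*} [NormedAddCommGroup H] [InnerProductSpace ℂ H] [CompleteSpace H]
    (M : VonNeumannAlgebra H) (T : ModularTheory H M)
    (Γ : Set (NormalState H)) (φ ω : NormalState H)
    (hφΓ : φ ∈ Γ) (hωΓ : ω ∈ Γ)
    (hφ : φ.IsFaithful M) (hω : ω.IsFaithful M) :
    genVN (cocycleSet M T Γ φ) = genVN (cocycleSet M T Γ ω) :=
  (genVN_subset_genVN (cocycleSet_subset_genVN_cocycleSet T hφΓ hφ hω)).antisymm
    (genVN_subset_genVN (cocycleSet_subset_genVN_cocycleSet T hωΓ hω hφ))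

/-- Let `Γ` be a family of normal states on `M` and let `φ, ω ∈ Γ` be two
faithful normal states such that `φ` commutes with `ω`.  Then the von Neumann algebra
generated by the Connes cocycles taken with respect to `φ` coincides with the one generated
by the cocycles taken with respect to `ω`:
`W*({[Dρ:Dφ]_t : t ∈ ℝ, ρ ∈ Γ}) = W*({[Dρ:Dω]_t : t ∈ ℝ, ρ ∈ Γ})`.
Consequently the definition of joint commutativity of `Γ` does not depend on the choice of
the faithful state in `Γ`. -/
theorem genVN_cocycles_independent_of_faithful_state
    {H : Type*} [NormedAddCommGroup H] [InnerProductSpace ℂ H] [CompleteSpace H]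
    (M : VonNeumannAlgebra H) (T : ModularTheory H M)
    (Γ : Set (NormalState H)) (φ ω : NormalState H)
    (hφΓ : φ ∈ Γ) (hωΓ : ω ∈ Γ)
    (hφ : φ.IsFaithful M) (hω : ω.IsFaithful M)
    (hcomm : CommutesWith M T φ ω) :
    genVN (cocycleSet M T Γ φ) = genVN (cocycleSet M T Γ ω) :=
  genVN_cocycles_independent_of_faithful_state_general M T Γ φ ω hφΓ hωΓ hφ hω
end
end

section
/- Let ω be a faithful normal state on a von Neumann algebra M and let A be a positive selfadjoint operator affiliated with the centralizer M^ω. Then for every x ∈ M one has ω_A((1+A)^{-1/2} x (1+A)^{-1/2}) = ω(A(1+A)^{-1} x), where ω_A is the normal weight defined by ω_A(x) = lim_{ε→0} ω_{A(1+εA)^{-1}}(x). -/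
open Filter

noncomputable section

variable {H : Type*} [NormedAddCommGroup H] [InnerProductSpace ℂ H] [CompleteSpace H]

/-!
Every operator involved is a continuous function of the resolvent `c`. The centralizer `M^ω` is a
norm-closed *-subalgebra containing `c`, hence all of these, and cycling them under `ω` turns
`ω(√(yosida ε c) √c x √c √(yosida ε c))` into `ω(c · yosida ε c · x)`. The contractions
`c · yosida ε c` converge strongly to `1 - c`: the defect is uniformly bounded and `O(ε)` after
composition with `c`, whose range is dense. A normal state is strongly continuous on bounded sets.
-/
open Topology Set

section DenseRange

variable {𝕜 E F G : Type*} [RCLike 𝕜] [NormedAddCommGroup E] [NormedSpace 𝕜 E]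
  [NormedAddCommGroup F] [NormedSpace 𝕜 F] [NormedAddCommGroup G] [NormedSpace 𝕜 G]

theorem tendsto_apply_zero_of_denseRange {ι : Type*} {l : Filter ι} {D : ι → E →L[𝕜] F}
    {c : G →L[𝕜] E} (hc : DenseRange c) {C : ℝ} (hD : ∀ᶠ i in l, ‖D i‖ ≤ C)
    (hDc : Tendsto (fun i => (D i).comp c) l (𝓝 0)) (v : E) :
    Tendsto (fun i => D i v) l (𝓝 0) := by
  rw [Metric.tendsto_nhds]
  intro δ hδ
  obtain ⟨w, hw⟩ := hc.exists_dist_lt v (show 0 < δ / (2 * (|C| + 1)) by positivity)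
  rw [dist_eq_norm] at hw
  have hsmall : ∀ᶠ i in l, ‖(D i).comp c‖ * ‖w‖ < δ / 2 := by
    have := (hDc.norm.mul_const ‖w‖)
    rw [norm_zero, zero_mul] at this
    exact this.eventually (gt_mem_nhds (half_pos hδ))
  filter_upwards [hD, hsmall] with i hi hsi
  have hDi : ‖D i‖ * ‖v - c w‖ ≤ δ / 2 := calc
    ‖D i‖ * ‖v - c w‖ ≤ (|C| + 1) * (δ / (2 * (|C| + 1))) := by
      gcongr
      exact hi.trans ((le_abs_self C).trans (le_add_of_nonneg_right zero_le_one))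
    _ = δ / 2 := by field_simp
  rw [dist_zero_right]
  calc ‖D i v‖ = ‖D i (v - c w) + (D i).comp c w‖ := by simp
    _ ≤ ‖D i‖ * ‖v - c w‖ + ‖(D i).comp c‖ * ‖w‖ :=
      norm_add_le_of_le ((D i).le_opNorm _) (((D i).comp c).le_opNorm _)
    _ < δ := by linarith

end DenseRange

theorem IsSelfAdjoint.denseRange_of_injective {𝕜 E : Type*} [RCLike 𝕜] [NormedAddCommGroup E]
    [InnerProductSpace 𝕜 E] [CompleteSpace E] {T : E →L[𝕜] E} (hT : IsSelfAdjoint T)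
    (hinj : Function.Injective T) : DenseRange T := by
  have : (LinearMap.range (T : E →ₗ[𝕜] E)).topologicalClosure = ⊤ := by
    rw [Submodule.topologicalClosure_eq_top_iff, ContinuousLinearMap.orthogonal_range,
      hT.adjoint_eq]
    exact LinearMap.ker_eq_bot.2 hinj
  rw [← Submodule.dense_iff_topologicalClosure_eq_top] at this
  simpa [DenseRange, LinearMap.coe_range] using this

theorem VonNeumannAlgebra.isClosed (M : VonNeumannAlgebra H) :
    IsClosed (M : Set (H →L[ℂ] H)) :=
  M.centralizer_centralizer ▸ Set.isClosed_centralizer _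

theorem spectrum_subset_Icc_of_nonneg_of_le_one {A : Type*} [CStarAlgebra A] [PartialOrder A]
    [StarOrderedRing A] {a : A} (h0 : 0 ≤ a) (h1 : a ≤ 1) : spectrum ℝ a ⊆ Icc 0 1 := by
  intro l hl
  refine ⟨spectrum_nonneg_of_nonneg h0 hl, ?_⟩
  exact (le_algebraMap_iff_spectrum_le (r := (1 : ℝ)) (IsSelfAdjoint.of_nonneg h0)).1
    (by simpa using h1) l hl

section InnerProductSpace

variable {E : Type*} [NormedAddCommGroup E] [InnerProductSpace ℂ E]

theorem ContinuousLinearMap.norm_inner_apply_self_le (x : E →L[ℂ] E) (ξ : E) :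
    ‖(inner ℂ ξ (x ξ) : ℂ)‖ ≤ ‖x‖ * ‖ξ‖ ^ 2 := calc
  ‖(inner ℂ ξ (x ξ) : ℂ)‖ ≤ ‖ξ‖ * (‖x‖ * ‖ξ‖) :=
    (norm_inner_le_norm _ _).trans (by gcongr; exact x.le_opNorm ξ)
  _ = ‖x‖ * ‖ξ‖ ^ 2 := by ring

theorem summable_inner_apply_self {ξ : ℕ → E} (hξ : Summable fun n => ‖ξ n‖ ^ 2)
    (x : E →L[ℂ] E) : Summable fun n => (inner ℂ (ξ n) (x (ξ n)) : ℂ) :=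
  .of_norm_bounded (hξ.mul_left ‖x‖) fun n => x.norm_inner_apply_self_le (ξ n)

theorem NormalState.isBoundedLinearMap_app (ω : NormalState E) : IsBoundedLinearMap ℂ ω.app := by
  obtain ⟨ξ, hξ, hξ1, hω⟩ := ω.normal
  refine ⟨⟨fun x y => ?_, fun a x => ?_⟩, ⟨1, one_pos, fun x => ?_⟩⟩
  · simp only [hω, add_apply, inner_add_right]
    exact (summable_inner_apply_self hξ x).tsum_add (summable_inner_apply_self hξ y)
  · simp only [hω, smul_apply, inner_smul_right, smul_eq_mul, tsum_mul_left]
  · rw [hω, one_mul]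
    refine tsum_of_norm_bounded ?_ fun n => x.norm_inner_apply_self_le (ξ n)
    simpa [hξ1] using hξ.hasSum.mul_left ‖x‖

theorem NormalState.tendsto_app_of_tendsto_apply (ω : NormalState E) {ι : Type*} {l : Filter ι}
    {T : ι → E →L[ℂ] E} {T₀ : E →L[ℂ] E} {C : ℝ} (hT : ∀ᶠ i in l, ‖T i‖ ≤ C)
    (hT₀ : ∀ v, Tendsto (fun i => T i v) l (𝓝 (T₀ v))) :
    Tendsto (fun i => ω.app (T i)) l (𝓝 (ω.app T₀)) := by
  obtain ⟨ξ, hξ, -, hω⟩ := ω.normal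
  simp only [hω]
  refine tendsto_tsum_of_dominated_convergence (hξ.mul_left C)
    (fun n => tendsto_const_nhds.inner (hT₀ (ξ n))) ?_
  filter_upwards [hT] with i hi n
  exact (ContinuousLinearMap.norm_inner_apply_self_le _ _).trans (by gcongr)

end InnerProductSpace

namespace NormalState

theorem app_star (ω : NormalState H) (x : H →L[ℂ] H) : ω.app (star x) = star (ω.app x) := by
  obtain ⟨ξ, -, -, hω⟩ := ω.normal
  simp only [hω, ContinuousLinearMap.star_eq_adjoint, ContinuousLinearMap.adjoint_inner_right]
  rw [tsum_star]
  simp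

def centralizer (ω : NormalState H) (M : VonNeumannAlgebra H) :
    StarSubalgebra ℂ (H →L[ℂ] H) where
  carrier := {a | a ∈ M ∧ ∀ y ∈ M, ω.app (a * y) = ω.app (y * a)}
  mul_mem' := by
    rintro a b ⟨haM, ha⟩ ⟨hbM, hb⟩
    refine ⟨mul_mem haM hbM, fun y hy => ?_⟩
    calc ω.app (a * b * y) = ω.app (b * y * a) := by rw [mul_assoc, ha _ (mul_mem hbM hy)]
      _ = ω.app (y * (a * b)) := by rw [mul_assoc, hb _ (mul_mem hy haM), mul_assoc]
  add_mem' := by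
    rintro a b ⟨haM, ha⟩ ⟨hbM, hb⟩
    refine ⟨add_mem haM hbM, fun y hy => ?_⟩
    simp only [add_mul, mul_add, ω.isBoundedLinearMap_app.map_add, ha y hy, hb y hy]
  algebraMap_mem' r := by
    refine ⟨M.toStarSubalgebra.algebraMap_mem r, fun y _ => ?_⟩
    rw [Algebra.commutes]
  star_mem' := by
    rintro a ⟨haM, ha⟩
    refine ⟨star_mem haM, fun y hy => ?_⟩
    rw [← star_star (star a * y), star_mul, star_star, app_star, ← ha _ (star_mem hy), ← app_star,
      star_mul, star_star]

theorem mem_centralizer_iff {ω : NormalState H} {M : VonNeumannAlgebra H} {a : H →L[ℂ] H} :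
    a ∈ ω.centralizer M ↔ a ∈ M ∧ ∀ y ∈ M, ω.app (a * y) = ω.app (y * a) :=
  Iff.rfl

theorem isClosed_centralizer (ω : NormalState H) (M : VonNeumannAlgebra H) :
    IsClosed (ω.centralizer M : Set (H →L[ℂ] H)) := by
  have hω := ω.isBoundedLinearMap_app.continuous
  have : (ω.centralizer M : Set (H →L[ℂ] H)) =
      (M : Set (H →L[ℂ] H)) ∩ ⋂ y ∈ M, {a | ω.app (a * y) = ω.app (y * a)} := by
    ext a
    simp [mem_centralizer_iff]
  rw [this]
  exact M.isClosed.inter <| isClosed_biInter fun y _ =>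
    isClosed_eq (hω.comp (continuous_mul_const y)) (hω.comp (continuous_const_mul y))

theorem cfc_mem_centralizer {ω : NormalState H} {M : VonNeumannAlgebra H} {c : H →L[ℂ] H}
    (hc : c ∈ ω.centralizer M) (f : ℝ → ℝ) : cfc f c ∈ ω.centralizer M :=
  cfc_mem (hs := ω.isClosed_centralizer M) f hc

theorem app_conj_conj {ω : NormalState H} {M : VonNeumannAlgebra H} {a b x : H →L[ℂ] H}
    (ha : a ∈ ω.centralizer M) (hb : b ∈ ω.centralizer M) (hx : x ∈ M) :
    ω.app (b * (a * x * a) * b) = ω.app (a * b * b * a * x) := by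
  have haM : a ∈ M := ha.1
  have hbM : b ∈ M := hb.1
  have habba : a * b * b * a ∈ ω.centralizer M := by
    have := (ω.centralizer M).mul_mem ha hb
    exact (ω.centralizer M).mul_mem ((ω.centralizer M).mul_mem this hb) ha
  calc ω.app (b * (a * x * a) * b) = ω.app (b * (a * x * a * b)) := by rw [mul_assoc]
    _ = ω.app (a * x * a * b * b) := hb.2 _ (mul_mem (mul_mem (mul_mem haM hx) haM) hbM)
    _ = ω.app (a * (x * a * b * b)) := by simp only [mul_assoc]
    _ = ω.app (x * a * b * b * a) := ha.2 _ (mul_mem (mul_mem (mul_mem hx haM) hbM) hbM)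
    _ = ω.app (x * (a * b * b * a)) := by simp only [mul_assoc]
    _ = ω.app (a * b * b * a * x) := (habba.2 x hx).symm

end NormalState

-- The Yosida approximant `t / (1 + ε t)` of `t ≥ 0`, as a function of `l = 1 / (1 + t)`.
def yosida (ε l : ℝ) : ℝ := (1 - l) / (l + ε * (1 - l))

section Yosida

variable {ε l : ℝ}

theorem yosida_denom_pos (hε : 0 < ε) (hl : l ∈ Icc (0 : ℝ) 1) : 0 < l + ε * (1 - l) := by
  rcases hl.1.eq_or_lt with rfl | hl0
  · simpa using hε
  · nlinarith [hl.2]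

theorem continuousOn_yosida (hε : 0 < ε) : ContinuousOn (yosida ε) (Icc 0 1) :=
  ContinuousOn.div (by fun_prop) (by fun_prop) fun _ hl => (yosida_denom_pos hε hl).ne'

theorem continuousOn_mul_yosida (hε : 0 < ε) : ContinuousOn (fun l => l * yosida ε l) (Icc 0 1) :=
  continuousOn_id.mul (continuousOn_yosida hε)

theorem yosida_nonneg (hε : 0 < ε) (hl : l ∈ Icc (0 : ℝ) 1) : 0 ≤ yosida ε l :=
  div_nonneg (by linarith [hl.2]) (yosida_denom_pos hε hl).le

theorem mul_yosida_le (hε : 0 < ε) (hl : l ∈ Icc (0 : ℝ) 1) : l * yosida ε l ≤ 1 - l := by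
  have hd := yosida_denom_pos hε hl
  rw [yosida, mul_div_assoc', div_le_iff₀ hd]
  nlinarith [mul_nonneg (mul_nonneg hε.le (sub_nonneg.2 hl.2)) (sub_nonneg.2 hl.2)]

theorem one_sub_sub_mul_yosida (hε : 0 < ε) (hl : l ∈ Icc (0 : ℝ) 1) :
    1 - l - l * yosida ε l = ε * (1 - l) ^ 2 / (l + ε * (1 - l)) := by
  have hd := (yosida_denom_pos hε hl).ne'
  rw [yosida, eq_div_iff hd, sub_mul, mul_div_assoc', div_mul_cancel₀ _ hd]
  ring

theorem one_sub_sub_mul_yosida_mul_le (hε : 0 < ε) (hl : l ∈ Icc (0 : ℝ) 1) :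
    (1 - l - l * yosida ε l) * l ≤ ε := by
  have hd := yosida_denom_pos hε hl
  rw [one_sub_sub_mul_yosida hε hl, div_mul_eq_mul_div, div_le_iff₀ hd]
  nlinarith [mul_nonneg (mul_nonneg (mul_nonneg hε.le hl.1) hl.1) (by linarith [hl.2] : 0 ≤ 2 - l),
    mul_nonneg (mul_nonneg hε.le hε.le) (sub_nonneg.2 hl.2)]

end Yosida

section CStarAlgebra

variable {A : Type*} [CStarAlgebra A] {a : A} {ε : ℝ}

theorem cfc_sqrt_mul_cfc_sqrt_yosida (hspec : spectrum ℝ a ⊆ Icc 0 1) (hε : 0 < ε) :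
    cfc Real.sqrt a * cfc (fun l => Real.sqrt (yosida ε l)) a *
      cfc (fun l => Real.sqrt (yosida ε l)) a * cfc Real.sqrt a =
      cfc (fun l => l * yosida ε l) a := by
  have hg : ContinuousOn (fun l => Real.sqrt (yosida ε l)) (spectrum ℝ a) :=
    (Real.continuous_sqrt.comp_continuousOn (continuousOn_yosida hε)).mono hspec
  have hs : ContinuousOn Real.sqrt (spectrum ℝ a) := Real.continuous_sqrt.continuousOn
  rw [← cfc_mul Real.sqrt _ a hs hg, ← cfc_mul (fun l => √l * √(yosida ε l)) _ a (hs.mul hg) hg,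
    ← cfc_mul (fun l => √l * √(yosida ε l) * √(yosida ε l)) _ a ((hs.mul hg).mul hg) hs]
  refine cfc_congr fun l hl => ?_
  have hl := hspec hl
  have hy := Real.mul_self_sqrt (yosida_nonneg hε hl)
  have hs := Real.mul_self_sqrt hl.1
  linear_combination (Real.sqrt l * Real.sqrt l) * hy + yosida ε l * hs

theorem norm_cfc_mul_yosida_le_one (hspec : spectrum ℝ a ⊆ Icc 0 1) (hε : 0 < ε) :
    ‖cfc (fun l => l * yosida ε l) a‖ ≤ 1 := by
  refine norm_cfc_le zero_le_one fun l hl => ?_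
  have hl := hspec hl
  rw [Real.norm_eq_abs, abs_le]
  constructor <;> nlinarith [mul_yosida_le hε hl, mul_nonneg hl.1 (yosida_nonneg hε hl), hl.1, hl.2]

theorem cfc_one_sub_sub_mul_yosida (ha : IsSelfAdjoint a) (hspec : spectrum ℝ a ⊆ Icc 0 1)
    (hε : 0 < ε) :
    cfc (fun l => 1 - l - l * yosida ε l) a = 1 - a - cfc (fun l => l * yosida ε l) a := by
  rw [cfc_sub (fun l => 1 - l) _ a (by fun_prop) ((continuousOn_mul_yosida hε).mono hspec),
    cfc_sub (fun _ => 1) (fun l => l) a, cfc_const_one ℝ a, cfc_id' ℝ a]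

theorem norm_cfc_one_sub_sub_mul_yosida_le_one (hspec : spectrum ℝ a ⊆ Icc 0 1) (hε : 0 < ε) :
    ‖cfc (fun l => 1 - l - l * yosida ε l) a‖ ≤ 1 := by
  refine norm_cfc_le zero_le_one fun l hl => ?_
  have hl := hspec hl
  rw [Real.norm_eq_abs, abs_le]
  constructor <;> nlinarith [mul_yosida_le hε hl, mul_nonneg hl.1 (yosida_nonneg hε hl), hl.1, hl.2]

theorem norm_cfc_one_sub_sub_mul_yosida_mul_le (ha : IsSelfAdjoint a)
    (hspec : spectrum ℝ a ⊆ Icc 0 1) (hε : 0 < ε) :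
    ‖cfc (fun l => 1 - l - l * yosida ε l) a * a‖ ≤ ε := by
  have hd : ContinuousOn (fun l => 1 - l - l * yosida ε l) (spectrum ℝ a) :=
    (by fun_prop : ContinuousOn (fun l : ℝ => 1 - l) _).sub
      ((continuousOn_mul_yosida hε).mono hspec)
  calc ‖cfc (fun l => 1 - l - l * yosida ε l) a * a‖
        = ‖cfc (fun l => (1 - l - l * yosida ε l) * l) a‖ := by
          rw [cfc_mul _ (fun l => l) a hd, cfc_id' ℝ a ha]
    _ ≤ ε := norm_cfc_le hε.le fun l hl => by
          have hl := hspec hl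
          rw [Real.norm_eq_abs, abs_le]
          constructor <;> nlinarith [mul_yosida_le hε hl, one_sub_sub_mul_yosida_mul_le hε hl,
            hl.1, hl.2]

end CStarAlgebra

theorem tendsto_cfc_mul_yosida_apply {c : H →L[ℂ] H} (hc : IsSelfAdjoint c)
    (hinj : Function.Injective c) (hspec : spectrum ℝ c ⊆ Icc 0 1) (v : H) :
    Tendsto (fun ε => cfc (fun l => l * yosida ε l) c v) (𝓝[>] 0) (𝓝 ((1 - c) v)) := by
  have hbound : ∀ᶠ ε in 𝓝[>] (0 : ℝ), ‖cfc (fun l => 1 - l - l * yosida ε l) c‖ ≤ 1 :=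
    eventually_nhdsWithin_of_forall fun ε hε =>
      norm_cfc_one_sub_sub_mul_yosida_le_one hspec hε
  have hcomp : Tendsto (fun ε => (cfc (fun l => 1 - l - l * yosida ε l) c).comp c)
      (𝓝[>] 0) (𝓝 0) :=
    squeeze_zero_norm' (eventually_nhdsWithin_of_forall fun ε hε =>
        norm_cfc_one_sub_sub_mul_yosida_mul_le hc hspec hε)
      (tendsto_nhdsWithin_of_tendsto_nhds tendsto_id)
  have hdefect := tendsto_apply_zero_of_denseRange (hc.denseRange_of_injective hinj) hbound hcomp v
  have hlim := hdefect.const_sub ((1 - c) v)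
  rw [sub_zero] at hlim
  refine hlim.congr' (eventually_nhdsWithin_of_forall fun ε hε => ?_)
  rw [cfc_one_sub_sub_mul_yosida hc hspec hε, ← sub_apply, sub_sub_cancel]

-- `A` enters through its resolvent `c = (1 + A)⁻¹`: `(1 + A)^{-1/2} = √c`, `A(1 + A)⁻¹ = 1 - c`
-- and `A(1 + εA)⁻¹ = yosida ε c`.
theorem omega_A_resolvent_formula_general
    {H : Type*} [NormedAddCommGroup H] [InnerProductSpace ℂ H] [CompleteSpace H]
    (M : VonNeumannAlgebra H) (ω : NormalState H)
    (c : H →L[ℂ] H) (hcM : c ∈ M) (hcpos : c.IsPositive)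
    (hcle : ((1 : H →L[ℂ] H) - c).IsPositive)
    (hcinj : ∀ ξ : H, c ξ = 0 → ξ = 0)
    (hccent : ∀ y ∈ M, ω.app (c * y) = ω.app (y * c)) :
    ∀ x ∈ M, Filter.Tendsto (fun ε : ℝ =>
        ω.app (cfc (fun l : ℝ => Real.sqrt ((1 - l) / (l + ε * (1 - l)))) c *
          (cfc Real.sqrt c * x * cfc Real.sqrt c) *
          cfc (fun l : ℝ => Real.sqrt ((1 - l) / (l + ε * (1 - l)))) c))
      (nhdsWithin 0 (Set.Ioi 0)) (nhds (ω.app (((1 : H →L[ℂ] H) - c) * x))) := by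
  intro x hx
  have hspec : spectrum ℝ c ⊆ Icc 0 1 := spectrum_subset_Icc_of_nonneg_of_le_one
    (c.nonneg_iff_isPositive.2 hcpos)
    (sub_nonneg.1 ((ContinuousLinearMap.nonneg_iff_isPositive _).2 hcle))
  have hc : c ∈ ω.centralizer M := ⟨hcM, hccent⟩
  have hconj : ∀ ε > 0, ω.app (cfc (fun l => √(yosida ε l)) c *
      (cfc Real.sqrt c * x * cfc Real.sqrt c) * cfc (fun l => √(yosida ε l)) c) =
      ω.app (cfc (fun l => l * yosida ε l) c * x) := fun ε hε => by
    rw [NormalState.app_conj_conj (NormalState.cfc_mem_centralizer hc _)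
      (NormalState.cfc_mem_centralizer hc _) hx, cfc_sqrt_mul_cfc_sqrt_yosida hspec hε]
  refine (tendsto_congr' (eventually_nhdsWithin_of_forall hconj)).2 ?_
  refine ω.tendsto_app_of_tendsto_apply (C := ‖x‖) ?_ fun v =>
    tendsto_cfc_mul_yosida_apply hcpos.isSelfAdjoint
      ((injective_iff_map_eq_zero c).2 hcinj) hspec (x v)
  filter_upwards [self_mem_nhdsWithin] with ε hε
  exact (norm_mul_le _ _).trans
    (mul_le_of_le_one_left (norm_nonneg x) (norm_cfc_mul_yosida_le_one hspec hε))

/-- Let `ω` be a faithful normal state on `M` and let `A` be a positive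
selfadjoint operator affiliated with the centralizer
`M^ω = {x ∈ M : ω(xy) = ω(yx) for all y ∈ M}`; `A` is encoded by its bounded resolvent
`c = (1+A)⁻¹ ∈ M^ω` (a positive injective contraction), so that
`(1+A)^{-1/2} = √c`, `A(1+A)⁻¹ = 1-c` and `A(1+εA)⁻¹ = f_ε(c)` with
`f_ε(l) = (1-l)/(l+ε(1-l))`.  Then for every `x ∈ M`,
`ω_A((1+A)^{-1/2} x (1+A)^{-1/2}) = ω(A(1+A)⁻¹ x)`, where
`ω_A(y) = lim_{ε→0⁺} ω_{A(1+εA)⁻¹}(y)` and `ω_a(y) = ω(a^{1/2} y a^{1/2})`; i.e. the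
defining limit exists and has the stated value. -/
theorem omega_A_resolvent_formula
    {H : Type*} [NormedAddCommGroup H] [InnerProductSpace ℂ H] [CompleteSpace H]
    (M : VonNeumannAlgebra H) (ω : NormalState H) (hω : ω.IsFaithful M)
    (c : H →L[ℂ] H) (hcM : c ∈ M) (hcpos : c.IsPositive)
    (hcle : ((1 : H →L[ℂ] H) - c).IsPositive)
    (hcinj : ∀ ξ : H, c ξ = 0 → ξ = 0)
    (hccent : ∀ y ∈ M, ω.app (c * y) = ω.app (y * c)) :
    ∀ x ∈ M, Filter.Tendsto (fun ε : ℝ =>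
        ω.app (cfc (fun l : ℝ => Real.sqrt ((1 - l) / (l + ε * (1 - l)))) c *
          (cfc Real.sqrt c * x * cfc Real.sqrt c) *
          cfc (fun l : ℝ => Real.sqrt ((1 - l) / (l + ε * (1 - l)))) c))
      (nhdsWithin 0 (Set.Ioi 0)) (nhds (ω.app (((1 : H →L[ℂ] H) - c) * x))) :=
  omega_A_resolvent_formula_general M ω c hcM hcpos hcle hcinj hccent
end
end
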